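/- Let Q₀ > 0, α < 0, and 0 < η < 1/log 2, and let q solve dq(t) = αq(t)dt + dW(t), q(0) = Q₀. Then there exist constants C > 0 and c_η > 0 such that Prob[ q(t) > Q₀/2 for all t ∈ [0, 1/(η|α|)] ] ≤ C·exp(−c_η·Q₀²·|α|). -/

import Mathlib

open MeasureTheory ProbabilityTheory

/-- A standard Brownian motion: starts at `0`, has continuous paths, and has
independent Gaussian increments with `W t - W s ∼ N(0, t - s)` for `0 ≤ s ≤ t`. -/
def IsStandardBrownianMotion {Ω : Type*} [MeasurableSpace Ω] (P : Measure Ω)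
    (W : ℝ → Ω → ℝ) : Prop :=
  (∀ ω, W 0 ω = 0) ∧
  (∀ ω, Continuous fun t => W t ω) ∧
  (∀ t, Measurable (W t)) ∧
  (∀ s t : ℝ, 0 ≤ s → s ≤ t →
    Measure.map (fun ω => W t ω - W s ω) P = gaussianReal 0 ((t - s).toNNReal)) ∧
  (∀ (n : ℕ) (ts : Fin (n + 1) → ℝ), Monotone ts → (∀ i, 0 ≤ ts i) →
    iIndepFun (m := fun _ => Real.measurableSpace)
      (fun (i : Fin n) ω => W (ts i.succ) ω - W (ts i.castSucc) ω) P)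

open Real Filter intervalIntegral
open scoped NNReal ENNReal

section Aux

lemma gauss_exp_key (v : ℝ≥0) (hv : v ≠ 0) (t x : ℝ) :
    exp (t * x) * gaussianPDFReal 0 v x = exp ((v:ℝ) * t^2 / 2) * gaussianPDFReal ((v:ℝ)*t) v x := by
  have hv' : (0:ℝ) < v := lt_of_le_of_ne v.coe_nonneg (by exact_mod_cast (Ne.symm hv))
  unfold gaussianPDFReal
  rw [mul_left_comm, mul_left_comm (exp _), ← Real.exp_add, ← Real.exp_add]
  congr 1
  field_simp
  ring

lemma integrable_dirac' {f : ℝ → ℝ} (hf : Measurable f) (a : ℝ) :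
    Integrable f (Measure.dirac a) := by
  refine ⟨hf.aestronglyMeasurable, ?_⟩
  rw [HasFiniteIntegral, lintegral_dirac' _ (by measurability)]
  exact ENNReal.coe_lt_top

lemma gauss_withDensity (v : ℝ≥0) (hv : v ≠ 0) :
    gaussianReal 0 v = MeasureTheory.volume.withDensity
      (fun x => ((gaussianPDFReal 0 v x).toNNReal : ℝ≥0∞)) := by
  rw [gaussianReal_of_var_ne_zero _ hv]
  rfl

lemma integrable_exp_gauss (v : ℝ≥0) (t : ℝ) :
    Integrable (fun x => exp (t * x)) (gaussianReal 0 v) := by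
  by_cases hv : v = 0
  · rw [hv, gaussianReal_zero_var]
    exact integrable_dirac' ((measurable_const_mul t).exp) 0
  · rw [gauss_withDensity v hv,
      integrable_withDensity_iff_integrable_smul (measurable_gaussianPDFReal 0 v).real_toNNReal]
    have : (fun x => (gaussianPDFReal 0 v x).toNNReal • exp (t*x))
        = fun x => exp ((v:ℝ)*t^2/2) * gaussianPDFReal ((v:ℝ)*t) v x := by
      funext x
      rw [NNReal.smul_def, smul_eq_mul, Real.coe_toNNReal _ (gaussianPDFReal_nonneg _ _ _),
        mul_comm, gauss_exp_key v hv]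
    rw [this]
    exact (integrable_gaussianPDFReal _ _).const_mul _

lemma integral_exp_gauss (v : ℝ≥0) (t : ℝ) :
    ∫ x, exp (t * x) ∂(gaussianReal 0 v) = exp ((v:ℝ) * t^2 / 2) := by
  by_cases hv : v = 0
  · rw [hv, gaussianReal_zero_var, integral_dirac]
    simp [hv]
  · rw [gauss_withDensity v hv, integral_withDensity_eq_integral_smul (measurable_gaussianPDFReal 0 v).real_toNNReal _]
    have : (fun x => ((gaussianPDFReal 0 v x).toNNReal) • exp (t*x))
        = fun x => exp ((v:ℝ)*t^2/2) * gaussianPDFReal ((v:ℝ)*t) v x := by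
      funext x
      rw [NNReal.smul_def, smul_eq_mul, Real.coe_toNNReal _ (gaussianPDFReal_nonneg _ _ _),
        mul_comm, gauss_exp_key v hv]
    rw [this, MeasureTheory.integral_const_mul, integral_gaussianPDFReal_eq_one _ hv, mul_one]


lemma pathwise {α Q₀ T : ℝ} (hT : 0 ≤ T) {g w : ℝ → ℝ} (hg : Continuous g) (hw : Continuous w)
    (heq : ∀ t ≥ (0:ℝ), g t = Q₀ + (∫ s in (0:ℝ)..t, α * g s) + w t) :
    g T = exp (α*T) * Q₀ + w T
      + exp (α*T) * ∫ s in (0:ℝ)..T, α * exp (-(α*s)) * w s := by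
  set ψ : ℝ → ℝ := fun t => Q₀ + ∫ s in (0:ℝ)..t, α * g s with hψ
  set φ : ℝ → ℝ := fun t => exp (-(α*t)) * ψ t - ∫ s in (0:ℝ)..t, α * exp (-(α*s)) * w s
    with hφ
  have hgc : Continuous fun s => α * g s := continuous_const.mul hg
  have hwc : Continuous fun s => α * exp (-(α*s)) * w s := by continuity
  have hφderiv : ∀ t : ℝ, HasDerivAt φ (α * exp (-(α*t)) * (g t - ψ t - w t)) t := by
    intro t
    have h1 : HasDerivAt ψ (α * g t) t := by
      have := (integral_hasDerivAt_right (hgc.intervalIntegrable 0 t)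
        (hgc.stronglyMeasurableAtFilter _ _) hgc.continuousAt)
      simpa [hψ] using this.const_add Q₀
    have h2 : HasDerivAt (fun t => exp (-(α*t))) (-α * exp (-(α*t))) t := by
      have : HasDerivAt (fun t : ℝ => -(α*t)) (-α) t := by
        simpa using ((hasDerivAt_id t).const_mul α).fun_neg
      simpa [mul_comm] using this.exp
    have h3 : HasDerivAt (fun t => ∫ s in (0:ℝ)..t, α * exp (-(α*s)) * w s)
        (α * exp (-(α*t)) * w t) t :=
      integral_hasDerivAt_right (hwc.intervalIntegrable 0 t)
        (hwc.stronglyMeasurableAtFilter _ _) hwc.continuousAt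
    have := (h2.fun_mul h1).fun_sub h3
    exact this.congr_deriv (by ring)
  have hconst : φ T = φ 0 := by
    have := constant_of_has_deriv_right_zero
      (f := φ) (a := 0) (b := T)
      (fun x hx => ((hφderiv x).differentiableAt.continuousAt).continuousWithinAt)
      (fun x hx => by
        have h0 : g x - ψ x - w x = 0 := by
          have := heq x hx.1
          simp only [hψ]; linarith
        simpa [h0] using ((hφderiv x).hasDerivWithinAt : HasDerivWithinAt φ _ (Set.Ici x) x))
    exact this T (Set.right_mem_Icc.mpr hT)
  have hφ0 : φ 0 = Q₀ := by simp [hφ, hψ]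
  have hψT : ψ T = g T - w T := by have := heq T hT; simp only [hψ]; linarith
  have hexp : exp (-(α*T)) ≠ 0 := exp_ne_zero _
  have key : exp (-(α*T)) * (g T - w T) - ∫ s in (0:ℝ)..T, α * exp (-(α*s)) * w s = Q₀ := by
    have h := hconst.trans hφ0
    simp only [hφ] at h
    rw [hψT] at h
    exact h
  have h2 : exp (α*T) * exp (-(α*T)) = 1 := by rw [← exp_add]; simp
  set I : ℝ := ∫ s in (0:ℝ)..T, α * exp (-(α*s)) * w s
  have h4 : g T - w T = exp (α*T) * Q₀ + exp (α*T) * I := by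
    calc g T - w T = (exp (α*T) * exp (-(α*T))) * (g T - w T) := by rw [h2]; ring
      _ = exp (α*T) * (exp (-(α*T)) * (g T - w T) - I) + exp (α*T) * I := by ring
      _ = exp (α*T) * Q₀ + exp (α*T) * I := by rw [key]
  linarith


lemma exp_int (α T a b : ℝ) :
    ∫ s in a..b, α * exp (α*(T-s)) = exp (α*(T-a)) - exp (α*(T-b)) := by
  have h : ∀ u : ℝ, HasDerivAt (fun u => -exp (α*(T-u))) (α * exp (α*(T-u))) u := by
    intro u
    have h1 : HasDerivAt (fun u : ℝ => α*(T-u)) (-α) u := by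
      simpa using (((hasDerivAt_id u).const_sub T).const_mul α)
    have := (h1.exp).fun_neg
    exact this.congr_deriv (by ring)
  have hec : Continuous fun u => α * exp (α*(T-u)) :=
    continuous_const.mul ((continuous_const.mul (continuous_const.sub continuous_id)).rexp)
  have := integral_eq_sub_of_hasDerivAt (fun u _ => h u) (hec.intervalIntegrable a b)
  rw [this]; ring

lemma riemann_conv {T α : ℝ} (hT : 0 < T) {w : ℝ → ℝ} (hw : Continuous w) (hw0 : w 0 = 0) :
    Tendsto (fun n : ℕ => ∑ j ∈ Finset.range (n+1),
        exp (α * (T - T*j/(n+1))) * (w (T*(j+1)/(n+1)) - w (T*j/(n+1)))) atTop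
      (nhds (w T + ∫ s in (0:ℝ)..T, α * exp (α*(T-s)) * w s)) := by
  have hec : Continuous fun u => α * exp (α*(T-u)) :=
    continuous_const.mul ((continuous_const.mul (continuous_const.sub continuous_id)).rexp)
  have hfc : Continuous fun s => α * exp (α*(T-s)) * w s := hec.mul hw
  -- uniform continuity on [0,T]... and bound M
  obtain ⟨M, hM0, hMb⟩ : ∃ M > 0, ∀ x ∈ Set.Icc (0:ℝ) T, abs (α * exp (α*(T-x))) ≤ M := by
    refine ⟨(|α|) * exp (|α| * T) + 1, by positivity, fun x hx => ?_⟩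
    rw [abs_mul, abs_exp]
    have : α * (T - x) ≤ |α| * T := by
      calc α * (T-x) ≤ |α * (T-x)| := le_abs_self _
        _ = |α| * |T - x| := abs_mul _ _
        _ ≤ |α| * T := by
            have : |T - x| ≤ T := by rw [abs_le]; constructor <;> [linarith [hx.2]; linarith [hx.1]]
            exact mul_le_mul_of_nonneg_left this (abs_nonneg _)
    nlinarith [exp_le_exp.2 this, exp_pos (|α| * T), abs_nonneg α]
  rw [Metric.tendsto_atTop]
  intro ε hε
  have hucw : ∀ ε' > 0, ∃ δ > 0, ∀ x ∈ Set.Icc (0:ℝ) T, ∀ y ∈ Set.Icc (0:ℝ) T,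
      |x - y| < δ → |w x - w y| < ε' := by
    have := (isCompact_Icc (a := (0:ℝ)) (b := T)).uniformContinuousOn_of_continuous
      hw.continuousOn
    rw [Metric.uniformContinuousOn_iff] at this
    intro ε' hε'
    obtain ⟨δ, hδ, h⟩ := this ε' hε'
    exact ⟨δ, hδ, fun x hx y hy hxy => by
      have := h x hx y hy (by rwa [Real.dist_eq]); rwa [Real.dist_eq] at this⟩
  set ε' := ε / (2 * (M * T + 1)) with hε'def
  have hε' : 0 < ε' := by positivity
  obtain ⟨δ, hδ, hδw⟩ := hucw ε' hε'
  obtain ⟨n₀, hn₀⟩ : ∃ n₀ : ℕ, T / (n₀+1) < δ := by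
    obtain ⟨n₀, hn₀⟩ := exists_nat_gt (T / δ)
    refine ⟨n₀, ?_⟩
    rw [div_lt_iff₀ (by positivity)]
    calc T = (T/δ) * δ := by field_simp
      _ < (n₀+1) * δ := by
          apply mul_lt_mul_of_pos_right _ hδ
          exact lt_of_lt_of_le hn₀ (by push_cast; linarith)
      _ = δ * (n₀+1) := by ring
  refine ⟨n₀, fun n hn => ?_⟩
  -- setup for fixed n
  set N : ℕ := n + 1 with hN
  set Δ : ℝ := T / N with hΔ
  have hNpos : (0:ℝ) < N := by positivity
  have hΔpos : 0 < Δ := by positivity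
  have hΔδ : Δ < δ := by
    have hcast : ((n₀:ℝ)+1) ≤ ((N:ℝ)) := by
      have : (n₀+1 : ℕ) ≤ N := by omega
      exact_mod_cast this
    have h2 : Δ ≤ T / ((n₀:ℝ)+1) :=
      div_le_div_of_nonneg_left hT.le (by positivity) hcast
    have h3 : T / ((n₀:ℝ)+1) < δ := by exact_mod_cast hn₀
    linarith
  set s : ℕ → ℝ := fun j => j * Δ with hs
  have hsm : ∀ j : ℕ, s j ≤ s (j+1) := fun j => by
    simp only [hs]; push_cast; nlinarith
  have hsN : s N = T := by
    simp only [hs, hΔ]; field_simp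
  have hsIcc : ∀ j ≤ N, s j ∈ Set.Icc (0:ℝ) T := by
    intro j hj
    constructor
    · simp only [hs]; positivity
    · rw [← hsN]; simp only [hs]
      apply mul_le_mul_of_nonneg_right _ hΔpos.le
      exact_mod_cast hj
  have hsval : ∀ j : ℕ, s j = T * j / N := fun j => by
    simp only [hs, hΔ]; ring
  set d : ℕ → ℝ := fun j => exp (α * (T - s j)) with hd
  -- identity
  have hid : ∑ j ∈ Finset.range N, d j * (w (s (j+1)) - w (s j))
      = w T + ∑ j ∈ Finset.range N, (∫ u in s j..s (j+1), α * exp (α*(T-u))) * w (s (j+1)) := by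
    have tele : ∑ j ∈ Finset.range N, (d (j+1) * w (s (j+1)) - d j * w (s j))
        = d N * w (s N) - d 0 * w (s 0) := Finset.sum_range_sub (fun j => d j * w (s j)) N
    have hdN : d N = 1 := by simp [hd, hsN]
    have hs0 : s 0 = 0 := by simp [hs]
    have expint : ∀ j : ℕ, (∫ u in s j..s (j+1), α * exp (α*(T-u))) = d j - d (j+1) := by
      intro j; rw [exp_int]
    calc ∑ j ∈ Finset.range N, d j * (w (s (j+1)) - w (s j))
        = (∑ j ∈ Finset.range N, (d (j+1) * w (s (j+1)) - d j * w (s j)))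
          + ∑ j ∈ Finset.range N, (d j - d (j+1)) * w (s (j+1)) := by
          rw [← Finset.sum_add_distrib]; apply Finset.sum_congr rfl; intro j _; ring
      _ = w T + ∑ j ∈ Finset.range N, (d j - d (j+1)) * w (s (j+1)) := by
          rw [tele, hdN, hsN, hs0, hw0]; ring
      _ = w T + ∑ j ∈ Finset.range N, (∫ u in s j..s (j+1), α * exp (α*(T-u))) * w (s (j+1)) := by
          congr 1; apply Finset.sum_congr rfl; intro j _; rw [expint]
  -- integral splitting
  have hsplit : (∫ u in (0:ℝ)..T, α * exp (α*(T-u)) * w u)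
      = ∑ j ∈ Finset.range N, ∫ u in s j..s (j+1), α * exp (α*(T-u)) * w u := by
    have := intervalIntegral.sum_integral_adjacent_intervals (a := s) (n := N) (μ := volume)
      (f := fun u => α * exp (α*(T-u)) * w u) (fun k _ => hfc.intervalIntegrable _ _)
    beta_reduce at this
    have hs0 : s 0 = 0 := by simp [hs]
    calc (∫ u in (0:ℝ)..T, α * exp (α*(T-u)) * w u)
        = ∫ u in (s 0)..(s N), α * exp (α*(T-u)) * w u := by rw [hs0, hsN]
      _ = ∑ j ∈ Finset.range N, ∫ u in s j..s (j+1), α * exp (α*(T-u)) * w u := this.symm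
  -- error bound
  have hbound : ∀ j < N, |(∫ u in s j..s (j+1), α * exp (α*(T-u))) * w (s (j+1))
      - ∫ u in s j..s (j+1), α * exp (α*(T-u)) * w u| ≤ M * ε' * Δ := by
    intro j hj
    have h1 : (∫ u in s j..s (j+1), α * exp (α*(T-u))) * w (s (j+1))
        = ∫ u in s j..s (j+1), α * exp (α*(T-u)) * w (s (j+1)) := by
      rw [intervalIntegral.integral_mul_const]
    rw [h1, ← intervalIntegral.integral_sub
      ((hec.fun_mul continuous_const).intervalIntegrable _ _)
      (hfc.intervalIntegrable _ _)]
    have hlen : s (j+1) - s j = Δ := by simp only [hs]; push_cast; ring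
    have := intervalIntegral.norm_integral_le_of_norm_le_const
      (a := s j) (b := s (j+1)) (C := M * ε')
      (f := fun u => α * exp (α*(T-u)) * w (s (j+1)) - α * exp (α*(T-u)) * w u) ?_
    · rw [Real.norm_eq_abs] at this
      calc |∫ u in s j..s (j+1), (α * exp (α*(T-u)) * w (s (j+1)) - α * exp (α*(T-u)) * w u)|
          ≤ M * ε' * |s (j+1) - s j| := this
        _ = M * ε' * Δ := by rw [hlen, abs_of_pos hΔpos]
    · intro x hx
      rw [Set.uIoc_of_le (hsm j)] at hx
      have hxIcc : x ∈ Set.Icc (0:ℝ) T := by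
        constructor
        · linarith [(hsIcc j (by omega)).1, hx.1.le]
        · linarith [(hsIcc (j+1) (by omega)).2, hx.2]
      have hj1 : s (j+1) ∈ Set.Icc (0:ℝ) T := hsIcc (j+1) (by omega)
      have hdist : |s (j+1) - x| < δ := by
        rw [abs_of_nonneg (by linarith [hx.2])]
        calc s (j+1) - x < s (j+1) - s j := by linarith [hx.1]
          _ = Δ := hlen
          _ < δ := hΔδ
      have hwd : |w (s (j+1)) - w x| < ε' := hδw _ hj1 _ hxIcc hdist
      show ‖α * exp (α*(T-x)) * w (s (j+1)) - α * exp (α*(T-x)) * w x‖ ≤ M * ε'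
      have heq2 : α * exp (α*(T-x)) * w (s (j+1)) - α * exp (α*(T-x)) * w x
          = α * exp (α*(T-x)) * (w (s (j+1)) - w x) := by ring
      rw [Real.norm_eq_abs, heq2, abs_mul]
      exact mul_le_mul (hMb x hxIcc) hwd.le (abs_nonneg _) hM0.le
  -- combine
  have hSn : ∑ j ∈ Finset.range (n+1),
      exp (α * (T - T*(j:ℝ)/((n:ℝ)+1))) * (w (T*((j:ℝ)+1)/((n:ℝ)+1)) - w (T*(j:ℝ)/((n:ℝ)+1)))
      = ∑ j ∈ Finset.range N, d j * (w (s (j+1)) - w (s j)) := by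
    apply Finset.sum_congr rfl
    intro j _
    have e1 : T*(j:ℝ)/((n:ℝ)+1) = s j := by rw [hsval]; norm_num [hN]
    have e2 : T*((j:ℝ)+1)/((n:ℝ)+1) = s (j+1) := by rw [hsval]; push_cast; norm_num [hN]
    rw [e1, e2, hd]
  rw [Real.dist_eq, hSn, hid, hsplit]
  have : |(w T + ∑ j ∈ Finset.range N, (∫ u in s j..s (j+1), α * exp (α*(T-u))) * w (s (j+1)))
      - (w T + ∑ j ∈ Finset.range N, ∫ u in s j..s (j+1), α * exp (α*(T-u)) * w u)|
      ≤ N * (M * ε' * Δ) := by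
    have : (w T + ∑ j ∈ Finset.range N, (∫ u in s j..s (j+1), α * exp (α*(T-u))) * w (s (j+1)))
      - (w T + ∑ j ∈ Finset.range N, ∫ u in s j..s (j+1), α * exp (α*(T-u)) * w u)
      = ∑ j ∈ Finset.range N, ((∫ u in s j..s (j+1), α * exp (α*(T-u))) * w (s (j+1))
          - ∫ u in s j..s (j+1), α * exp (α*(T-u)) * w u) := by
      rw [Finset.sum_sub_distrib]; ring
    rw [this]
    calc |∑ j ∈ Finset.range N, ((∫ u in s j..s (j+1), α * exp (α*(T-u))) * w (s (j+1))
          - ∫ u in s j..s (j+1), α * exp (α*(T-u)) * w u)|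
        ≤ ∑ j ∈ Finset.range N, |(∫ u in s j..s (j+1), α * exp (α*(T-u))) * w (s (j+1))
          - ∫ u in s j..s (j+1), α * exp (α*(T-u)) * w u| := Finset.abs_sum_le_sum_abs _ _
      _ ≤ ∑ j ∈ Finset.range N, (M * ε' * Δ) := by
          apply Finset.sum_le_sum; intro j hj
          exact hbound j (Finset.mem_range.1 hj)
      _ = N * (M * ε' * Δ) := by rw [Finset.sum_const, Finset.card_range]; push_cast; ring
  have hNΔ : (N:ℝ) * Δ = T := by rw [hΔ]; field_simp
  calc _ ≤ (N:ℝ) * (M * ε' * Δ) := this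
    _ = M * T * ε' := by rw [← hNΔ]; ring
    _ = M * T * (ε / (2 * (M * T + 1))) := rfl
    _ < ε := by
        have hb : (0:ℝ) < 2 * (M*T+1) := by positivity
        rw [show M*T*(ε/(2*(M*T+1))) = (M*T)*ε/(2*(M*T+1)) from by ring, div_lt_iff₀ hb]
        nlinarith [mul_pos (mul_pos hM0 hT) hε, hε]

lemma mgf_bound {Ω : Type} [m : MeasurableSpace Ω] (P : Measure Ω) [IsProbabilityMeasure P]
    {W : ℝ → Ω → ℝ} (hBM : IsStandardBrownianMotion P W) {T : ℝ} (hT : 0 < T)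
    (l : ℝ) (n : ℕ) (c : ℕ → ℝ) (hc : ∀ j, j < n + 1 → abs (c j) ≤ 1) :
    Integrable (fun ω => exp (l * ∑ i : Fin (n+1),
        c i * (W (T*(i+1)/(n+1)) ω - W (T*i/(n+1)) ω))) P ∧
    ∫ ω, exp (l * ∑ i : Fin (n+1),
        c i * (W (T*(i+1)/(n+1)) ω - W (T*i/(n+1)) ω)) ∂P ≤ exp (l^2 * T / 2) := by
  set N : ℕ := n + 1 with hN
  have hNpos : (0:ℝ) < N := by positivity
  set Δ : ℝ := T / N with hΔdef
  have hΔpos : 0 < Δ := by positivity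
  set ts : Fin (N+1) → ℝ := fun i => T * i / N with hts
  have hts_mono : Monotone ts := by
    intro i j hij
    simp only [hts]
    have hij' : (i:ℝ) ≤ (j:ℝ) := by exact_mod_cast hij
    have hT' : (0:ℝ) ≤ T := hT.le
    gcongr
  have hts_nonneg : ∀ i, 0 ≤ ts i := fun i => by simp only [hts]; positivity
  set X : Fin N → Ω → ℝ := fun i ω => W (ts i.succ) ω - W (ts i.castSucc) ω with hX
  have hXmeas : ∀ i, Measurable (X i) := fun i =>
    (hBM.2.2.1 _).sub (hBM.2.2.1 _)
  have hdiff : ∀ i : Fin N, ts i.succ - ts i.castSucc = Δ := by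
    intro i
    simp only [hts, Fin.val_succ, Fin.coe_castSucc, hΔdef]
    push_cast
    field_simp
    ring
  have hlaw : ∀ i : Fin N, Measure.map (X i) P = gaussianReal 0 Δ.toNNReal := by
    intro i
    have := hBM.2.2.2.1 (ts i.castSucc) (ts i.succ) (hts_nonneg _)
      (hts_mono (Fin.castSucc_le_succ i))
    rw [hdiff i] at this
    exact this
  have h_indep : iIndepFun (m := fun _ => Real.measurableSpace) X P :=
    hBM.2.2.2.2 N ts hts_mono hts_nonneg
  set Y : Fin N → Ω → ℝ := fun i ω => c i * X i ω with hY
  have hYmeas : ∀ i, Measurable (Y i) := fun i => (hXmeas i).const_mul _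
  have hY_indep : iIndepFun (m := fun _ => Real.measurableSpace) Y P := by
    have := h_indep.comp (fun i : Fin N => fun x : ℝ => (c i) * x)
      (fun i => measurable_const_mul _)
    exact this
  have hYint : ∀ i : Fin N, Integrable (fun ω => exp (l * Y i ω)) P := by
    intro i
    have h1 : Integrable (fun x => exp ((l * c i) * x)) (Measure.map (X i) P) := by
      rw [hlaw i]; exact integrable_exp_gauss _ _
    have h2 := (integrable_map_measure
      (by exact (measurable_const_mul (l * c i)).exp.aestronglyMeasurable)
      (hXmeas i).aemeasurable).mp h1
    apply h2.congr
    filter_upwards with ω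
    simp only [Function.comp, hY]
    ring_nf
  have hYmgf : ∀ i : Fin N, mgf (Y i) P l = exp (Δ * (l * c i)^2 / 2) := by
    intro i
    unfold mgf
    have h1 : ∀ ω, exp (l * Y i ω) = exp ((l * c i) * X i ω) := by
      intro ω; simp only [hY]; ring_nf
    simp_rw [h1]
    have h2 : ∫ x, exp ((l * c i) * x) ∂(Measure.map (X i) P) = exp (Δ * (l * c i)^2/2) := by
      rw [hlaw i, integral_exp_gauss, Real.coe_toNNReal _ hΔpos.le]
    rw [← h2]
    exact (integral_map (hXmeas i).aemeasurable
      (by exact (measurable_const_mul (l * c i)).exp.aestronglyMeasurable)).symm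
  have hpt : ∀ ω, ∑ i : Fin (n+1), c i * (W (T*(i+1)/(n+1)) ω - W (T*i/(n+1)) ω)
      = (∑ i : Fin N, Y i) ω := by
    intro ω
    rw [Finset.sum_apply]
    apply Finset.sum_congr rfl
    intro i _
    simp only [hY, hX, hts, Fin.val_succ, Fin.coe_castSucc]
    push_cast
    ring_nf
    simp only [hN]; push_cast; ring_nf
  have hint : Integrable (fun ω => exp (l * (∑ i : Fin N, Y i) ω)) P :=
    h_indep.comp (fun i : Fin N => fun x : ℝ => (c i) * x)
      (fun i => measurable_const_mul _) |>.integrable_exp_mul_sum hYmeas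
      (fun i _ => hYint i)
  have hmgf : mgf (∑ i : Fin N, Y i) P l = ∏ i : Fin N, mgf (Y i) P l :=
    hY_indep.mgf_sum hYmeas Finset.univ
  have hprod : ∏ i : Fin N, mgf (Y i) P l ≤ exp (l^2 * T / 2) := by
    rw [Finset.prod_congr rfl (fun i _ => hYmgf i), ← Real.exp_sum]
    apply Real.exp_le_exp.2
    calc ∑ i : Fin N, Δ * (l * c i)^2/2 ≤ ∑ i : Fin N, Δ * l^2/2 := by
          apply Finset.sum_le_sum
          intro i _
          have h1 : (l * c i)^2 ≤ l^2 := by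
            have := hc i i.isLt
            have h2 : (c i)^2 ≤ 1 := by nlinarith [abs_nonneg (c i), sq_abs (c i)]
            nlinarith [sq_nonneg l]
          nlinarith [hΔpos]
      _ = N * (Δ * l^2/2) := by rw [Finset.sum_const, Finset.card_univ, Fintype.card_fin]; push_cast; ring
      _ = l^2 * T/2 := by
          have : (N:ℝ) * Δ = T := by rw [hΔdef]; field_simp
          nlinarith [this]
  constructor
  · apply hint.congr
    filter_upwards with ω
    rw [hpt ω]
  · have heq : ∫ ω, exp (l * ∑ i : Fin (n+1),
        c i * (W (T*(i+1)/(n+1)) ω - W (T*i/(n+1)) ω)) ∂P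
        = mgf (∑ i : Fin N, Y i) P l := by
      unfold mgf
      apply MeasureTheory.integral_congr_ae
      filter_upwards with ω
      rw [hpt ω]
    rw [heq, hmgf]
    exact hprod

end Aux

/-- For `dq = α q dt + dW`, `q(0) = Q₀ > 0`, `α < 0`, the probability that `q` stays
above `Q₀/2` on `[0, 1/(η|α|)]` is at most `C exp(-c_η Q₀² |α|)`. -/
theorem prob_stays_above_half :
    ∃ C > (0 : ℝ), ∀ η : ℝ, 0 < η → η < 1 / Real.log 2 → ∃ c > (0 : ℝ),
      ∀ (Ω : Type) (_ : MeasurableSpace Ω) (P : Measure Ω), IsProbabilityMeasure P →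
      ∀ (W : ℝ → Ω → ℝ), IsStandardBrownianMotion P W →
      ∀ (Q₀ α : ℝ), 0 < Q₀ → α < 0 →
      ∀ (q : ℝ → Ω → ℝ), (∀ t, Measurable (q t)) → (∀ ω, Continuous fun t => q t ω) →
      (∀ ω, ∀ t ≥ (0 : ℝ), q t ω = Q₀ + (∫ s in (0 : ℝ)..t, α * q s ω) + W t ω) →
      P {ω | ∀ t ∈ Set.Icc (0 : ℝ) (1 / (η * |α|)), q t ω > Q₀ / 2}
        ≤ ENNReal.ofReal (C * Real.exp (-(c * Q₀ ^ 2 * |α|))) := by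
  refine ⟨1, one_pos, fun η hη hηlog => ?_⟩
  set κ : ℝ := 1/2 - exp (-(1/η)) with hκdef
  have hκpos : 0 < κ := by
    have hlog2 : 0 < Real.log 2 := Real.log_pos (by norm_num)
    have h1 : Real.log 2 < 1/η := by
      rw [lt_div_iff₀ hη]
      have := (lt_div_iff₀ hlog2).mp hηlog
      linarith
    have h2 : exp (-(1/η)) < exp (-(Real.log 2)) := by
      apply Real.exp_lt_exp.2; linarith
    have h3 : exp (-(Real.log 2)) = 1/2 := by
      rw [Real.exp_neg, Real.exp_log (by norm_num : (0:ℝ) < 2)]; norm_num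
    simp only [hκdef]; rw [h3] at h2; linarith
  refine ⟨η * κ^2 / 2, by positivity, ?_⟩
  intro Ω mΩ P hP W hBM Q₀ α hQ₀ hα q hqmeas hqcont hqeq
  haveI := hP
  have hαabs : |α| = -α := abs_of_neg hα
  have hαpos : 0 < |α| := abs_pos.mpr hα.ne
  set T : ℝ := 1 / (η * |α|) with hTdef
  have hT : 0 < T := by positivity
  have hαT : α * T = -(1/η) := by
    rw [hTdef, hαabs]
    have hd : -(η * α) ≠ 0 := ne_of_gt (by nlinarith)
    field_simp
    simp [hα.ne]
  set δ : ℝ := Q₀ * κ with hδdef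
  have hδpos : 0 < δ := by positivity
  set l : ℝ := δ / T with hldef
  have hlpos : 0 < l := by positivity
  -- G
  set G : Ω → ℝ := fun ω => W T ω + ∫ s in (0:ℝ)..T, α * exp (α*(T-s)) * W s ω with hGdef
  have hWcont := hBM.2.1
  have hW0 := hBM.1
  -- pathwise
  have hpath : ∀ ω, q T ω = exp (α*T) * Q₀ + G ω := by
    intro ω
    have h1 := pathwise (α := α) (Q₀ := Q₀) (T := T) hT.le (hqcont ω) (hWcont ω) (hqeq ω)
    have hbridge : exp (α*T) * (∫ s in (0:ℝ)..T, α * exp (-(α*s)) * W s ω)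
        = ∫ s in (0:ℝ)..T, α * exp (α*(T-s)) * W s ω := by
      rw [← intervalIntegral.integral_const_mul]
      apply intervalIntegral.integral_congr
      intro s _
      show exp (α*T) * (α * exp (-(α*s)) * W s ω) = α * exp (α*(T-s)) * W s ω
      have h2 : exp (α*T) * exp (-(α*s)) = exp (α*(T-s)) := by
        rw [← Real.exp_add]; ring_nf
      rw [← h2]; ring
    rw [h1]
    simp only [hGdef]
    rw [← hbridge]
    ring
  -- event inclusion
  have hsubset : {ω | ∀ t ∈ Set.Icc (0:ℝ) T, q t ω > Q₀ / 2} ⊆ {ω | δ ≤ G ω} := by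
    intro ω hω
    have hqT : q T ω > Q₀ / 2 := hω T ⟨hT.le, le_refl T⟩
    rw [hpath ω, hαT] at hqT
    have : G ω > Q₀ * (1/2 - exp (-(1/η))) := by nlinarith
    simp only [Set.mem_setOf_eq, hδdef, hκdef]
    linarith
  -- discrete sums
  set S : ℕ → Ω → ℝ := fun n ω => ∑ i : Fin (n+1),
    exp (α * (T - T*(i:ℕ)/(n+1))) * (W (T*((i:ℕ)+1)/(n+1)) ω - W (T*(i:ℕ)/(n+1)) ω) with hSdef
  have hSmeas : ∀ n, Measurable (S n) := by
    intro n
    apply Finset.measurable_sum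
    intro i _
    exact ((hBM.2.2.1 _).sub (hBM.2.2.1 _)).const_mul _
  have hSconv : ∀ ω, Tendsto (fun n => S n ω) atTop (nhds (G ω)) := by
    intro ω
    have h1 := riemann_conv (α := α) hT (hWcont ω) (hW0 ω)
    have h2 : ∀ n : ℕ, S n ω = ∑ j ∈ Finset.range (n+1),
        exp (α * (T - T*j/(n+1))) * (W (T*(j+1)/(n+1)) ω - W (T*j/(n+1)) ω) := by
      intro n
      exact Fin.sum_univ_eq_sum_range
        (fun j : ℕ => exp (α * (T - T*j/(n+1))) * (W (T*(j+1)/(n+1)) ω - W (T*j/(n+1)) ω)) (n+1)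
    simp only [hGdef]
    rw [show (fun n => S n ω) = fun n : ℕ => ∑ j ∈ Finset.range (n+1),
        exp (α * (T - T*j/(n+1))) * (W (T*(j+1)/(n+1)) ω - W (T*j/(n+1)) ω) from funext h2]
    exact h1
  have hGmeas : Measurable G :=
    measurable_of_tendsto_metrizable hSmeas (tendsto_pi_nhds.mpr hSconv)
  -- mgf bounds per n
  have hmgf : ∀ n : ℕ, ∫⁻ ω, ENNReal.ofReal (exp (l * S n ω)) ∂P
      ≤ ENNReal.ofReal (exp (l^2 * T / 2)) := by
    intro n
    have hc : ∀ j, j < n + 1 → abs (exp (α * (T - T*(j:ℕ)/(n+1)))) ≤ 1 := by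
      intro j hj
      rw [abs_exp]
      apply Real.exp_le_one_iff.2  -- check name
      have hjn : (j:ℝ) ≤ n + 1 := by exact_mod_cast Nat.le_of_lt_succ hj |>.trans (Nat.le_succ n)
      have h1 : T*(j:ℝ)/(n+1) ≤ T := by
        rw [div_le_iff₀ (by positivity)]
        nlinarith [hT]
      nlinarith [hT, h1]
    obtain ⟨hint, hval⟩ := mgf_bound P hBM hT l n
      (fun j => exp (α * (T - T*(j:ℕ)/(n+1)))) hc
    have heq : (fun ω => exp (l * ∑ i : Fin (n+1),
        exp (α * (T - T*(i:ℕ)/(n+1))) * (W (T*((i:ℕ)+1)/(n+1)) ω - W (T*(i:ℕ)/(n+1)) ω)))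
        = fun ω => exp (l * S n ω) := by
      funext ω; rfl
    rw [heq] at hint hval
    rw [← ofReal_integral_eq_lintegral_ofReal hint
      (ae_of_all _ (fun ω => (Real.exp_pos _).le))]
    exact ENNReal.ofReal_le_ofReal hval
  -- Fatou
  set f : Ω → ℝ≥0∞ := fun ω => ENNReal.ofReal (exp (l * G ω)) with hfdef
  set fn : ℕ → Ω → ℝ≥0∞ := fun n ω => ENNReal.ofReal (exp (l * S n ω)) with hfndef
  have hfnmeas : ∀ n, Measurable (fn n) := fun n =>
    (((hSmeas n).const_mul l).exp).ennreal_ofReal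
  have hfconv : ∀ ω, Tendsto (fun n => fn n ω) atTop (nhds (f ω)) := by
    intro ω
    apply (ENNReal.continuous_ofReal.tendsto _).comp
    apply (Real.continuous_exp.tendsto _).comp
    exact (hSconv ω).const_mul l
  have hflim : ∀ ω, f ω = liminf (fun n => fn n ω) atTop := fun ω => ((hfconv ω).liminf_eq).symm
  have hfatou : ∫⁻ ω, f ω ∂P ≤ ENNReal.ofReal (exp (l^2 * T / 2)) := by
    calc ∫⁻ ω, f ω ∂P = ∫⁻ ω, liminf (fun n => fn n ω) atTop ∂P := by
          apply lintegral_congr; intro ω; exact hflim ω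
      _ ≤ liminf (fun n => ∫⁻ ω, fn n ω ∂P) atTop := lintegral_liminf_le hfnmeas
      _ ≤ ENNReal.ofReal (exp (l^2 * T / 2)) :=
          liminf_le_of_frequently_le' (Frequently.of_forall hmgf)
  -- Markov
  set ε : ℝ≥0∞ := ENNReal.ofReal (exp (l * δ)) with hεdef
  have hε0 : ε ≠ 0 := by
    simp only [hεdef, ne_eq, ENNReal.ofReal_eq_zero, not_le]
    exact Real.exp_pos _
  have hεtop : ε ≠ ⊤ := ENNReal.ofReal_ne_top
  have hmarkov : ε * P {ω | δ ≤ G ω} ≤ ENNReal.ofReal (exp (l^2 * T / 2)) := by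
    have h1 : {ω | δ ≤ G ω} ⊆ {ω | ε ≤ f ω} := by
      intro ω hω
      simp only [Set.mem_setOf_eq] at *
      apply ENNReal.ofReal_le_ofReal
      apply Real.exp_le_exp.2
      exact mul_le_mul_of_nonneg_left hω hlpos.le
    calc ε * P {ω | δ ≤ G ω} ≤ ε * P {ω | ε ≤ f ω} := by
          apply mul_le_mul_right (measure_mono h1)
      _ ≤ ∫⁻ ω, f ω ∂P := mul_meas_ge_le_lintegral₀ (((hGmeas.const_mul l).exp).ennreal_ofReal).aemeasurable ε
      _ ≤ ENNReal.ofReal (exp (l^2 * T / 2)) := hfatou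
  -- conclude
  have hfinal : P {ω | ∀ t ∈ Set.Icc (0:ℝ) T, q t ω > Q₀ / 2}
      ≤ ENNReal.ofReal (exp (l^2 * T / 2 - l * δ)) := by
    calc P {ω | ∀ t ∈ Set.Icc (0:ℝ) T, q t ω > Q₀ / 2} ≤ P {ω | δ ≤ G ω} :=
          measure_mono hsubset
      _ ≤ ENNReal.ofReal (exp (l^2 * T / 2)) / ε := by
          rw [ENNReal.le_div_iff_mul_le (Or.inl hε0) (Or.inl hεtop), mul_comm]
          exact hmarkov
      _ = ENNReal.ofReal (exp (l^2 * T / 2 - l * δ)) := by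
          rw [hεdef, ← ENNReal.ofReal_div_of_pos (Real.exp_pos _), ← Real.exp_sub]
  have harith : l^2 * T / 2 - l * δ = -(η * κ^2 / 2 * Q₀^2 * |α|) := by
    rw [hldef, hδdef, hTdef]
    field_simp
    ring
  rw [harith] at hfinal
  calc P {ω | ∀ t ∈ Set.Icc (0:ℝ) T, q t ω > Q₀ / 2}
      ≤ ENNReal.ofReal (exp (-(η * κ^2 / 2 * Q₀^2 * |α|))) := hfinal
    _ = ENNReal.ofReal (1 * exp (-(η * κ^2 / 2 * Q₀^2 * |α|))) := by rw [one_mul]
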